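/- arXiv:1909.04636 — 2 statements merged into one kernel-verified Lean document; each statement's English description precedes it below -/
import Mathlib

section
/- Let (Ω, Σ, μ) be a probability space, T a measure-preserving transformation, and p a T-invariant measurable exponent with 1 < p⁻ ≤ p⁺ < ∞. For f ∈ L^{p(·),θ}(Ω) (θ > 0), the Birkhoff averages A_n f(x) = (1/n) Σ_{j=0}^{n−1} f(T^j(x)) converge μ-almost everywhere to a limit f_av, and f_av ∈ L^{p(·),θ}(Ω) with ‖f_av‖_{p(·),θ} ≤ ‖f‖_{p(·),θ}. -/
open MeasureTheory ENNReal Filter Topology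

/-- Luxemburg norm for a variable exponent `p` over measure `μ`. -/
noncomputable def luxNorm {Ω : Type*} [MeasurableSpace Ω] (μ : Measure Ω)
    (p : Ω → ℝ) (f : Ω → ℝ) : ℝ≥0∞ :=
  sInf {c : ℝ≥0∞ | 0 < c ∧ ∫⁻ x, (ENNReal.ofReal |f x| / c) ^ (p x) ∂μ ≤ 1}

/-- Grand variable exponent Lebesgue "norm" with parameter `θ`. -/
noncomputable def grandNorm {Ω : Type*} [MeasurableSpace Ω] (μ : Measure Ω)
    (p : Ω → ℝ) (θ : ℝ) (f : Ω → ℝ) : ℝ≥0∞ :=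
  ⨆ ε ∈ Set.Ioo (0:ℝ) (essInf p μ - 1),
    ENNReal.ofReal (ε ^ (θ / (essInf p μ - ε))) * luxNorm μ (fun x => p x - ε) f

/-!
Birkhoff averages converge a.e. by the maximal ergodic theorem: on a `T`-invariant set where
`S_n f - n b` is unbounded above, `∫ f ≥ b μ`, which rules out oscillation across rationals
`a < b` as well as escape to `±∞`. A finite grand norm makes one Luxemburg norm with exponent
`≥ 1` finite, hence `f ∈ L¹`. For the bound, Jensen's inequality together with the invariance of
`μ` and `p` shows that no Birkhoff average has larger modular than `f`, and Fatou's lemma passes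
this to the limit; so every `‖·‖_{p(·)-ε}`, and with it the grand norm, can only decrease.
-/

section MaxBirkhoffSum

variable {Ω : Type*} {T : Ω → Ω} {g : Ω → ℝ}

noncomputable def maxBirkhoffSum (T : Ω → Ω) (g : Ω → ℝ) (N : ℕ) : Ω → ℝ :=
  (Finset.range (N + 1)).sup' Finset.nonempty_range_add_one fun n => birkhoffSum T g n

lemma maxBirkhoffSum_apply (N : ℕ) (x : Ω) :
    maxBirkhoffSum T g N x =
      (Finset.range (N + 1)).sup' Finset.nonempty_range_add_one fun n => birkhoffSum T g n x :=
  Finset.sup'_apply _ _ x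

lemma birkhoffSum_le_maxBirkhoffSum {n N : ℕ} (h : n ≤ N) (x : Ω) :
    birkhoffSum T g n x ≤ maxBirkhoffSum T g N x := by
  rw [maxBirkhoffSum_apply]
  exact Finset.le_sup' (fun n => birkhoffSum T g n x) (Finset.mem_range_succ_iff.2 h)

lemma maxBirkhoffSum_nonneg (N : ℕ) (x : Ω) : 0 ≤ maxBirkhoffSum T g N x := by
  simpa using birkhoffSum_le_maxBirkhoffSum (T := T) (g := g) N.zero_le x

lemma maxBirkhoffSum_pos_iff (N : ℕ) (x : Ω) :
    0 < maxBirkhoffSum T g N x ↔ ∃ n ≤ N, 0 < birkhoffSum T g n x := by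
  simp [maxBirkhoffSum_apply, Finset.lt_sup'_iff]

lemma maxBirkhoffSum_mono (x : Ω) : Monotone fun N => maxBirkhoffSum T g N x :=
  fun _ _ h => by
    simp only [maxBirkhoffSum_apply]
    exact Finset.sup'_mono _ (Finset.range_subset_range.2 (by omega)) _

/-- Garsia's lemma. -/
lemma maxBirkhoffSum_le_add_comp (N : ℕ) {x : Ω} (hx : 0 < maxBirkhoffSum T g N x) :
    maxBirkhoffSum T g N x ≤ g x + maxBirkhoffSum T g N (T x) := by
  obtain ⟨n, hn, hmax⟩ := Finset.exists_mem_eq_sup' Finset.nonempty_range_add_one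
    fun n => birkhoffSum T g n x
  rw [maxBirkhoffSum_apply, hmax] at hx ⊢
  cases n with
  | zero => simp at hx
  | succ m =>
    rw [birkhoffSum_succ']
    gcongr
    exact birkhoffSum_le_maxBirkhoffSum (by simp at hn; omega) (T x)

end MaxBirkhoffSum

section MaximalErgodic

variable {Ω : Type*} [MeasurableSpace Ω] {μ : Measure Ω} {T : Ω → Ω} {g : Ω → ℝ}

lemma measurable_birkhoffSum (hT : Measurable T) (hg : Measurable g) (n : ℕ) :
    Measurable (birkhoffSum T g n) :=
  Finset.measurable_sum _ fun j _ => hg.comp (hT.iterate j)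

lemma measurable_birkhoffAverage (hT : Measurable T) (hg : Measurable g) (n : ℕ) :
    Measurable (birkhoffAverage ℝ T g n) := by
  change Measurable fun x => (n : ℝ)⁻¹ • birkhoffSum T g n x
  exact (measurable_birkhoffSum hT hg n).const_smul ((n : ℝ)⁻¹)

lemma integrable_birkhoffSum (hT : MeasurePreserving T μ μ) (hg : Integrable g μ) (n : ℕ) :
    Integrable (birkhoffSum T g n) μ :=
  integrable_finsetSum _ fun j _ => (hT.iterate j).integrable_comp_of_integrable hg

lemma measurable_maxBirkhoffSum (hT : Measurable T) (hg : Measurable g) (N : ℕ) :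
    Measurable (maxBirkhoffSum T g N) :=
  Finset.measurable_sup' _ fun n _ => measurable_birkhoffSum hT hg n

lemma integrable_maxBirkhoffSum (hT : MeasurePreserving T μ μ) (hg : Integrable g μ) (N : ℕ) :
    Integrable (maxBirkhoffSum T g N) μ :=
  Finset.sup'_induction (p := fun F => Integrable F μ) _ _ (fun _ h₁ _ h₂ => h₁.sup h₂)
    fun n _ => integrable_birkhoffSum hT hg n

lemma setIntegral_maxBirkhoffSum_pos_nonneg (hT : MeasurePreserving T μ μ) (hg : Measurable g)
    (hgi : Integrable g μ) (N : ℕ) :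
    0 ≤ ∫ x in {x | 0 < maxBirkhoffSum T g N x}, g x ∂μ := by
  set M := maxBirkhoffSum T g N
  set A := {x | 0 < M x}
  have hM : Measurable M := measurable_maxBirkhoffSum hT.measurable hg N
  have hA : MeasurableSet A := measurableSet_lt measurable_const hM
  have hMi : Integrable M μ := integrable_maxBirkhoffSum hT hgi N
  have hMT : Integrable (fun x => M (T x)) μ := hT.integrable_comp_of_integrable hMi
  have hdiff : Integrable (fun x => M x - M (T x)) μ := hMi.sub hMT
  have hcompl : ∀ x, M x - M (T x) ≤ A.indicator (fun x => M x - M (T x)) x := by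
    intro x
    by_cases hx : x ∈ A
    · simp [hx]
    · have hMx : M x = 0 := le_antisymm (not_lt.1 hx) (maxBirkhoffSum_nonneg N x)
      simp [hx, hMx, maxBirkhoffSum_nonneg N (T x), M]
  calc 0 = ∫ x, (M x - M (T x)) ∂μ := by
        rw [integral_sub hMi hMT,
          ← integral_map hT.measurable.aemeasurable hM.aestronglyMeasurable, hT.map_eq, sub_self]
    _ ≤ ∫ x in A, (M x - M (T x)) ∂μ := by
        rw [← integral_indicator hA]
        exact integral_mono hdiff (hdiff.indicator hA) hcompl
    _ ≤ ∫ x in A, g x ∂μ :=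
        setIntegral_mono_on hdiff.integrableOn hgi.integrableOn hA fun x hx => by
          linarith [maxBirkhoffSum_le_add_comp N hx]

/-- The maximal ergodic theorem. -/
theorem setIntegral_birkhoffSum_pos_nonneg (hT : MeasurePreserving T μ μ) (hg : Measurable g)
    (hgi : Integrable g μ) :
    0 ≤ ∫ x in {x | ∃ n, 0 < birkhoffSum T g n x}, g x ∂μ := by
  have hUnion : (⋃ N, {x | 0 < maxBirkhoffSum T g N x}) = {x | ∃ n, 0 < birkhoffSum T g n x} := by
    ext x
    simp only [Set.mem_iUnion, Set.mem_ofPred_eq, maxBirkhoffSum_pos_iff]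
    exact ⟨fun ⟨_, n, _, hn⟩ => ⟨n, hn⟩, fun ⟨n, hn⟩ => ⟨n, n, le_rfl, hn⟩⟩
  have hlim := tendsto_setIntegral_of_monotone (s := fun N => {x | 0 < maxBirkhoffSum T g N x})
    (fun N => measurableSet_lt measurable_const (measurable_maxBirkhoffSum hT.measurable hg N))
    (fun _ _ h x hx => hx.trans_le (maxBirkhoffSum_mono x h)) hgi.integrableOn
  rw [hUnion] at hlim
  exact ge_of_tendsto' hlim fun N => setIntegral_maxBirkhoffSum_pos_nonneg hT hg hgi N

end MaximalErgodic

section UnboundedSet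

variable {Ω : Type*} {T : Ω → Ω} {g : Ω → ℝ}

def birkhoffUnboundedSet (T : Ω → Ω) (g : Ω → ℝ) (b : ℝ) : Set Ω :=
  {x | ∀ C : ℕ, ∃ n : ℕ, (C : ℝ) < birkhoffSum T g n x - n * b}

/-- `S_n g (T x) - n b` is `S_{n+1} g x - (n+1) b` shifted by the constant `b - g x`. -/
lemma mapsTo_birkhoffUnboundedSet (b : ℝ) :
    Set.MapsTo T (birkhoffUnboundedSet T g b) (birkhoffUnboundedSet T g b) := by
  intro x hx C
  obtain ⟨n, hn⟩ := hx ⌈C - b + g x⌉₊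
  cases n with
  | zero =>
    simp only [birkhoffSum_zero, CharP.cast_eq_zero, zero_mul, sub_zero] at hn
    exact absurd hn (not_lt.2 (Nat.cast_nonneg _))
  | succ n =>
    refine ⟨n, ?_⟩
    rw [birkhoffSum_succ'] at hn
    push_cast at hn
    linarith [Nat.le_ceil ((C : ℝ) - b + g x)]

lemma mem_birkhoffUnboundedSet_of_frequently_lt {x : Ω} {b b' : ℝ} (hb : b < b')
    (h : ∃ᶠ n in atTop, b' < birkhoffAverage ℝ T g n x) : x ∈ birkhoffUnboundedSet T g b := by
  intro C
  obtain ⟨n, hn, hNn⟩ := (h.and_eventually (eventually_gt_atTop ⌈C / (b' - b)⌉₊)).exists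
  refine ⟨n, ?_⟩
  have hn0 : (0 : ℝ) < n := by exact_mod_cast (Nat.zero_le _).trans_lt hNn
  have hCn : C < n * (b' - b) := by
    rw [← div_lt_iff₀ (sub_pos.2 hb)]
    exact (Nat.le_ceil _).trans_lt (by exact_mod_cast hNn)
  have hS : birkhoffSum T g n x = n * birkhoffAverage ℝ T g n x := by
    rw [birkhoffAverage, smul_eq_mul, mul_inv_cancel_left₀ hn0.ne']
  rw [hS]
  nlinarith [mul_lt_mul_of_pos_left hn hn0]

lemma exists_tendsto_birkhoffAverage_of_notMem {x : Ω}
    (hup : ∃ k : ℕ, x ∉ birkhoffUnboundedSet T g k)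
    (hdown : ∃ k : ℕ, x ∉ birkhoffUnboundedSet T (-g) k)
    (hosc : ∀ a b : ℚ, a < b → x ∉ birkhoffUnboundedSet T g b ∩ birkhoffUnboundedSet T (-g) (-a)) :
    ∃ l, Tendsto (fun n => birkhoffAverage ℝ T g n x) atTop (𝓝 l) := by
  have hneg (n : ℕ) : birkhoffAverage ℝ T (-g) n x = -birkhoffAverage ℝ T g n x := by
    rw [birkhoffAverage_neg]; rfl
  obtain ⟨k, hk⟩ := hup
  obtain ⟨k', hk'⟩ := hdown
  have hle : ∀ᶠ n in atTop, birkhoffAverage ℝ T g n x ≤ k + 1 := by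
    by_contra h
    exact hk (mem_birkhoffUnboundedSet_of_frequently_lt (lt_add_one _)
      ((not_eventually.1 h).mono fun n hn => not_le.1 hn))
  have hge : ∀ᶠ n in atTop, -(k' + 1 : ℝ) ≤ birkhoffAverage ℝ T g n x := by
    by_contra h
    refine hk' (mem_birkhoffUnboundedSet_of_frequently_lt (lt_add_one _)
      ((not_eventually.1 h).mono fun n hn => ?_))
    rw [hneg]
    linarith [not_le.1 hn]
  refine tendsto_of_no_upcrossings Rat.denseRange_cast ?_
    (isBoundedUnder_of_eventually_le hle) (isBoundedUnder_of_eventually_ge hge)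
  rintro _ ⟨a, rfl⟩ _ ⟨b, rfl⟩ hlt ⟨ha, hb⟩
  have hab : a < b := by exact_mod_cast hlt
  have hupper : x ∈ birkhoffUnboundedSet T g ((a + 2 * b) / 3 : ℚ) :=
    mem_birkhoffUnboundedSet_of_frequently_lt (by push_cast; linarith) hb
  have hlower : x ∈ birkhoffUnboundedSet T (-g) (-((2 * a + b) / 3 : ℚ)) :=
    mem_birkhoffUnboundedSet_of_frequently_lt (b' := -a) (by push_cast; linarith)
      (ha.mono fun n hn => by rw [hneg]; linarith)
  exact hosc _ _ (by linarith) ⟨hupper, hlower⟩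

end UnboundedSet

section PointwiseErgodic

variable {Ω : Type*} [MeasurableSpace Ω] {μ : Measure Ω} [IsFiniteMeasure μ] {T : Ω → Ω}
  {g : Ω → ℝ}

omit [IsFiniteMeasure μ] in
lemma measurableSet_birkhoffUnboundedSet (hT : Measurable T) (hg : Measurable g) (b : ℝ) :
    MeasurableSet (birkhoffUnboundedSet T g b) := by
  simp only [birkhoffUnboundedSet, Set.ofPred_forall, Set.ofPred_exists]
  exact .iInter fun C => .iUnion fun n =>
    measurableSet_lt measurable_const ((measurable_birkhoffSum hT hg n).sub_const _)

lemma mul_measureReal_le_setIntegral_of_subset (hT : MeasurePreserving T μ μ) (hg : Measurable g)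
    (hgi : Integrable g μ) {E : Set Ω} (hE : MeasurableSet E) (hET : Set.MapsTo T E E) {b : ℝ}
    (hEb : E ⊆ birkhoffUnboundedSet T g b) :
    b * μ.real E ≤ ∫ x in E, g x ∂μ := by
  set h := E.indicator fun x => g x - b
  have hsum (x : Ω) (hx : x ∈ E) (n : ℕ) : birkhoffSum T h n x = birkhoffSum T g n x - n * b := by
    simp only [birkhoffSum, h]
    rw [Finset.sum_congr rfl fun j _ => Set.indicator_of_mem (hET.iterate j hx) _]
    simp [Finset.sum_sub_distrib]
  have hED : E ⊆ {x | ∃ n, 0 < birkhoffSum T h n x} := fun x hx => by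
    obtain ⟨n, hn⟩ := hEb hx 0
    exact ⟨n, by rw [hsum x hx n]; simpa using hn⟩
  have hmax := setIntegral_birkhoffSum_pos_nonneg hT ((hg.sub_const b).indicator hE)
    ((hgi.sub (integrable_const b)).indicator hE)
  rw [setIntegral_indicator hE, Set.inter_eq_self_of_subset_right hED,
    integral_sub hgi.integrableOn (integrableOn_const), setIntegral_const, smul_eq_mul] at hmax
  linarith

lemma measure_birkhoffUnboundedSet_inter_neg_eq_zero (hT : MeasurePreserving T μ μ)
    (hg : Measurable g) (hgi : Integrable g μ) {a b : ℝ} (hab : a < b) :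
    μ (birkhoffUnboundedSet T g b ∩ birkhoffUnboundedSet T (-g) (-a)) = 0 := by
  set E := birkhoffUnboundedSet T g b ∩ birkhoffUnboundedSet T (-g) (-a)
  have hE : MeasurableSet E := (measurableSet_birkhoffUnboundedSet hT.measurable hg b).inter
    (measurableSet_birkhoffUnboundedSet hT.measurable hg.neg (-a))
  have hET : Set.MapsTo T E E :=
    (mapsTo_birkhoffUnboundedSet b).inter_inter (mapsTo_birkhoffUnboundedSet (-a))
  have hupper := mul_measureReal_le_setIntegral_of_subset hT hg hgi hE hET Set.inter_subset_left
  have hlower :=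
    mul_measureReal_le_setIntegral_of_subset hT hg.neg hgi.neg hE hET Set.inter_subset_right
  simp only [Pi.neg_apply, integral_neg] at hlower
  have : μ.real E = 0 := by nlinarith [measureReal_nonneg (μ := μ) (s := E)]
  exact (measureReal_eq_zero_iff).1 this

lemma measure_iInter_birkhoffUnboundedSet_eq_zero (hT : MeasurePreserving T μ μ)
    (hg : Measurable g) (hgi : Integrable g μ) :
    μ (⋂ k : ℕ, birkhoffUnboundedSet T g k) = 0 := by
  set E := ⋂ k : ℕ, birkhoffUnboundedSet T g k
  have hE : MeasurableSet E :=
    .iInter fun k => measurableSet_birkhoffUnboundedSet hT.measurable hg k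
  have hET : Set.MapsTo T E E := Set.mapsTo_iInter_iInter fun k => mapsTo_birkhoffUnboundedSet k
  have hle (k : ℕ) : k * μ.real E ≤ ∫ x in E, g x ∂μ :=
    mul_measureReal_le_setIntegral_of_subset hT hg hgi hE hET (Set.iInter_subset _ k)
  refine (measureReal_eq_zero_iff).1 (le_antisymm (not_lt.1 fun hpos => ?_) measureReal_nonneg)
  obtain ⟨k, hk⟩ := exists_nat_gt ((∫ x in E, g x ∂μ) / μ.real E)
  rw [div_lt_iff₀ hpos] at hk
  linarith [hle k]

/-- Birkhoff's pointwise ergodic theorem. -/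
theorem ae_exists_tendsto_birkhoffAverage (hT : MeasurePreserving T μ μ) (hg : Measurable g)
    (hgi : Integrable g μ) :
    ∀ᵐ x ∂μ, ∃ l, Tendsto (fun n => birkhoffAverage ℝ T g n x) atTop (𝓝 l) := by
  have hup := measure_eq_zero_iff_ae_notMem.1
    (measure_iInter_birkhoffUnboundedSet_eq_zero hT hg hgi)
  have hdown := measure_eq_zero_iff_ae_notMem.1
    (measure_iInter_birkhoffUnboundedSet_eq_zero hT hg.neg hgi.neg)
  have hosc : ∀ᵐ x ∂μ, ∀ a b : ℚ, a < b →
      x ∉ birkhoffUnboundedSet T g b ∩ birkhoffUnboundedSet T (-g) (-a) := by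
    refine ae_all_iff.2 fun a => ae_all_iff.2 fun b => ?_
    by_cases hab : a < b
    · exact (measure_eq_zero_iff_ae_notMem.1 (measure_birkhoffUnboundedSet_inter_neg_eq_zero hT hg
        hgi (Rat.cast_lt.2 hab))).mono fun x hx _ => hx
    · exact .of_forall fun x h => absurd h hab
  filter_upwards [hup, hdown, hosc] with x hx₁ hx₂ hx₃
  simp only [Set.mem_iInter, not_forall] at hx₁ hx₂
  exact exists_tendsto_birkhoffAverage_of_notMem hx₁ hx₂ hx₃

end PointwiseErgodic

section Luxemburg

variable {Ω : Type*} [MeasurableSpace Ω] {μ : Measure Ω} {q f : Ω → ℝ}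

/-- The modular whose unit sublevel set defines `luxNorm μ q f`. -/
noncomputable def luxModular (μ : Measure Ω) (q f : Ω → ℝ) (c : ℝ≥0∞) : ℝ≥0∞ :=
  ∫⁻ x, (ENNReal.ofReal |f x| / c) ^ (q x) ∂μ

lemma luxNorm_le_of_luxModular_le {g : Ω → ℝ}
    (h : ∀ c ≠ 0, luxModular μ q g c ≤ luxModular μ q f c) :
    luxNorm μ q g ≤ luxNorm μ q f :=
  sInf_le_sInf fun c ⟨hc, hfc⟩ => ⟨hc, (h c hc.ne').trans hfc⟩

lemma integrable_of_luxNorm_lt_top [IsFiniteMeasure μ] (hf : Measurable f)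
    (hq : ∀ᵐ x ∂μ, 1 ≤ q x) (hfin : luxNorm μ q f < ⊤) : Integrable f μ := by
  obtain ⟨c, ⟨hc0, hfc⟩, hctop⟩ := sInf_lt_iff.1 hfin
  have hpt : ∀ᵐ x ∂μ, ENNReal.ofReal |f x| ≤ c * (1 + (ENNReal.ofReal |f x| / c) ^ (q x)) := by
    filter_upwards [hq] with x hx
    set t := ENNReal.ofReal |f x| / c
    have ht : t ≤ 1 + t ^ (q x) := by
      rcases le_total t 1 with h | h
      · exact h.trans le_self_add
      · exact (le_rpow_self_of_one_le h hx).trans le_add_self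
    calc ENNReal.ofReal |f x| = c * t := (ENNReal.mul_div_cancel hc0.ne' hctop.ne).symm
      _ ≤ c * (1 + t ^ (q x)) := by gcongr
  have hbound : ∫⁻ x, ENNReal.ofReal |f x| ∂μ < ⊤ := calc
    ∫⁻ x, ENNReal.ofReal |f x| ∂μ ≤ ∫⁻ x, c * (1 + (ENNReal.ofReal |f x| / c) ^ (q x)) ∂μ :=
      lintegral_mono_ae hpt
    _ = c * (μ Set.univ + luxModular μ q f c) := by
      rw [lintegral_const_mul' _ _ hctop.ne, lintegral_add_left measurable_const, lintegral_const,
        one_mul, luxModular]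
    _ < ⊤ := ENNReal.mul_lt_top hctop
      (ENNReal.add_lt_top.2 ⟨measure_lt_top μ _, hfc.trans_lt ENNReal.one_lt_top⟩)
  refine ⟨hf.aestronglyMeasurable, ?_⟩
  simpa [hasFiniteIntegral_iff_norm] using hbound

lemma luxModular_le_liminf_of_tendsto {F : ℕ → Ω → ℝ} {g : Ω → ℝ} (hF : ∀ n, Measurable (F n))
    (hq : Measurable q) (hlim : ∀ᵐ x ∂μ, Tendsto (fun n => F n x) atTop (𝓝 (g x)))
    {c : ℝ≥0∞} (hc : c ≠ 0) :
    luxModular μ q g c ≤ liminf (fun n => luxModular μ q (F n) c) atTop := by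
  have hpt : (fun x => (ENNReal.ofReal |g x| / c) ^ (q x)) =ᵐ[μ]
      fun x => liminf (fun n => (ENNReal.ofReal |F n x| / c) ^ (q x)) atTop := by
    filter_upwards [hlim] with x hx
    have hcont : Continuous fun t : ℝ => (ENNReal.ofReal |t| / c) ^ (q x) :=
      ENNReal.continuous_rpow_const.comp
        ((ENNReal.continuous_div_const c hc).comp (ENNReal.continuous_ofReal.comp continuous_abs))
    exact ((hcont.tendsto _).comp hx).liminf_eq.symm
  calc luxModular μ q g c
      = ∫⁻ x, liminf (fun n => (ENNReal.ofReal |F n x| / c) ^ (q x)) atTop ∂μ :=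
        lintegral_congr_ae hpt
    _ ≤ liminf (fun n => luxModular μ q (F n) c) atTop :=
        lintegral_liminf_le fun n => (((hF n).abs.ennreal_ofReal).div_const c).pow hq

end Luxemburg

section BirkhoffLuxemburg

variable {Ω : Type*} [MeasurableSpace Ω] {μ : Measure Ω} {T : Ω → Ω} {q f : Ω → ℝ}

lemma ofReal_abs_mean_div_rpow_le {n : ℕ} (hn : n ≠ 0) (a : ℕ → ℝ) (c : ℝ≥0∞) {r : ℝ}
    (hr : 1 ≤ r) :
    (ENNReal.ofReal |(n : ℝ)⁻¹ * ∑ j ∈ Finset.range n, a j| / c) ^ r ≤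
      (n : ℝ≥0∞)⁻¹ * ∑ j ∈ Finset.range n, (ENNReal.ofReal |a j| / c) ^ r := by
  have hmean : ENNReal.ofReal |(n : ℝ)⁻¹ * ∑ j ∈ Finset.range n, a j| / c ≤
      ∑ j ∈ Finset.range n, (n : ℝ≥0∞)⁻¹ * (ENNReal.ofReal |a j| / c) := by
    calc ENNReal.ofReal |(n : ℝ)⁻¹ * ∑ j ∈ Finset.range n, a j| / c
        ≤ (n : ℝ≥0∞)⁻¹ * (∑ j ∈ Finset.range n, ENNReal.ofReal |a j|) / c := by
          gcongr
          rw [← ENNReal.ofReal_natCast, ← ENNReal.ofReal_inv_of_pos (by positivity),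
            ← ENNReal.ofReal_sum_of_nonneg fun j _ => abs_nonneg _,
            ← ENNReal.ofReal_mul (by positivity)]
          apply ENNReal.ofReal_le_ofReal
          rw [abs_mul, abs_inv, Nat.abs_cast]
          gcongr
          exact Finset.abs_sum_le_sum_abs _ _
      _ = ∑ j ∈ Finset.range n, (n : ℝ≥0∞)⁻¹ * (ENNReal.ofReal |a j| / c) := by
          simp only [div_eq_mul_inv, Finset.mul_sum, Finset.sum_mul, mul_assoc]
  have hweights : ∑ _j ∈ Finset.range n, (n : ℝ≥0∞)⁻¹ = 1 := by
    rw [Finset.sum_const, Finset.card_range, nsmul_eq_mul,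
      ENNReal.mul_inv_cancel (by exact_mod_cast hn) (ENNReal.natCast_ne_top n)]
  calc _ ≤ (∑ j ∈ Finset.range n, (n : ℝ≥0∞)⁻¹ * (ENNReal.ofReal |a j| / c)) ^ r :=
        ENNReal.rpow_le_rpow hmean (by linarith)
    _ ≤ ∑ j ∈ Finset.range n, (n : ℝ≥0∞)⁻¹ * (ENNReal.ofReal |a j| / c) ^ r :=
        ENNReal.rpow_arith_mean_le_arith_mean_rpow _ _ _ hweights hr
    _ = _ := (Finset.mul_sum ..).symm

lemma ae_eq_comp_iterate {β : Type*} (hT : Measure.QuasiMeasurePreserving T μ μ) {q : Ω → β}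
    (h : q ∘ T =ᵐ[μ] q) (j : ℕ) :
    q ∘ T^[j] =ᵐ[μ] q := by
  induction j with
  | zero => rfl
  | succ j ih =>
    rw [Function.iterate_succ, ← Function.comp_assoc]
    exact (hT.ae_eq_comp ih).trans h

lemma luxModular_comp_iterate (hT : MeasurePreserving T μ μ) (hf : Measurable f)
    (hq : Measurable q) (hqT : q ∘ T =ᵐ[μ] q) (j : ℕ) (c : ℝ≥0∞) :
    luxModular μ q (f ∘ T^[j]) c = luxModular μ q f c :=
  calc luxModular μ q (f ∘ T^[j]) c
      = ∫⁻ x, (ENNReal.ofReal |f (T^[j] x)| / c) ^ (q (T^[j] x)) ∂μ :=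
        lintegral_congr_ae <| (ae_eq_comp_iterate hT.quasiMeasurePreserving hqT j).mono
          fun x hx => by simp only [Function.comp_apply] at hx ⊢; rw [hx]
    _ = luxModular μ q f c :=
        (hT.iterate j).lintegral_comp ((hf.abs.ennreal_ofReal.div_const c).pow hq)

lemma luxModular_birkhoffAverage_le (hT : MeasurePreserving T μ μ) (hf : Measurable f)
    (hq : Measurable q) (hq1 : ∀ᵐ x ∂μ, 1 ≤ q x) (hqT : q ∘ T =ᵐ[μ] q) (n : ℕ) (c : ℝ≥0∞) :
    luxModular μ q (birkhoffAverage ℝ T f n) c ≤ luxModular μ q f c := by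
  rcases eq_or_ne n 0 with rfl | hn
  · calc luxModular μ q (birkhoffAverage ℝ T f 0) c = 0 := by
          refine (lintegral_congr_ae (hq1.mono fun x hx => ?_)).trans lintegral_zero
          simp [ENNReal.zero_rpow_of_pos (by linarith : 0 < q x)]
      _ ≤ _ := bot_le
  have hmeas (j : ℕ) : Measurable fun x => (ENNReal.ofReal |f (T^[j] x)| / c) ^ (q x) :=
    ((hf.comp (hT.measurable.iterate j)).abs.ennreal_ofReal.div_const c).pow hq
  calc luxModular μ q (birkhoffAverage ℝ T f n) c
      ≤ ∫⁻ x, (n : ℝ≥0∞)⁻¹ * ∑ j ∈ Finset.range n, (ENNReal.ofReal |f (T^[j] x)| / c) ^ (q x) ∂μ :=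
        lintegral_mono_ae (hq1.mono fun x hx => ofReal_abs_mean_div_rpow_le hn _ c hx)
    _ = (n : ℝ≥0∞)⁻¹ * ∑ j ∈ Finset.range n, luxModular μ q (f ∘ T^[j]) c := by
        rw [lintegral_const_mul' _ _ (ENNReal.inv_ne_top.2 (by exact_mod_cast hn)),
          lintegral_finsetSum _ fun j _ => hmeas j]
        rfl
    _ = luxModular μ q f c := by
        simp only [luxModular_comp_iterate hT hf hq hqT, Finset.sum_const, Finset.card_range,
          nsmul_eq_mul, ← mul_assoc]
        rw [ENNReal.inv_mul_cancel (by exact_mod_cast hn) (ENNReal.natCast_ne_top n), one_mul]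

lemma luxNorm_le_of_tendsto_birkhoffAverage (hT : MeasurePreserving T μ μ) (hf : Measurable f)
    (hq : Measurable q) (hq1 : ∀ᵐ x ∂μ, 1 ≤ q x) (hqT : q ∘ T =ᵐ[μ] q) {fav : Ω → ℝ}
    (hlim : ∀ᵐ x ∂μ, Tendsto (fun n => birkhoffAverage ℝ T f n x) atTop (𝓝 (fav x))) :
    luxNorm μ q fav ≤ luxNorm μ q f :=
  luxNorm_le_of_luxModular_le fun c hc =>
    (luxModular_le_liminf_of_tendsto (measurable_birkhoffAverage hT.measurable hf) hq hlim hc).trans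
      (liminf_le_of_frequently_le' (.of_forall fun n =>
        luxModular_birkhoffAverage_le hT hf hq hq1 hqT n c))

end BirkhoffLuxemburg

section GrandNorm

variable {Ω : Type*} [MeasurableSpace Ω] {μ : Measure Ω} {p : Ω → ℝ} {θ : ℝ}

/-- In `ℝ`, `essInf` of a function that is not a.e. bounded below is the junk value `0`. -/
lemma ae_essInf_le_of_ne_zero (h : essInf p μ ≠ 0) : ∀ᵐ x ∂μ, essInf p μ ≤ p x :=
  ae_essInf_le (by by_contra hb; exact h (Real.liminf_of_not_isBoundedUnder hb))

lemma luxNorm_lt_top_of_grandNorm_lt_top {ε : ℝ} {f : Ω → ℝ}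
    (hε : ε ∈ Set.Ioo 0 (essInf p μ - 1)) (hf : grandNorm μ p θ f < ⊤) :
    luxNorm μ (fun x => p x - ε) f < ⊤ :=
  ENNReal.lt_top_of_mul_ne_top_right
    ((le_iSup₂ (f := fun ε (_ : ε ∈ Set.Ioo 0 (essInf p μ - 1)) =>
      ENNReal.ofReal (ε ^ (θ / (essInf p μ - ε))) * luxNorm μ (fun x => p x - ε) f) ε hε).trans_lt
        hf).ne
    (ENNReal.ofReal_pos.2 (Real.rpow_pos_of_pos hε.1 _)).ne'

lemma grandNorm_le_of_luxNorm_le {f g : Ω → ℝ} (h : ∀ ε ∈ Set.Ioo 0 (essInf p μ - 1),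
    luxNorm μ (fun x => p x - ε) g ≤ luxNorm μ (fun x => p x - ε) f) :
    grandNorm μ p θ g ≤ grandNorm μ p θ f :=
  iSup₂_mono fun ε hε => by gcongr; exact h ε hε

end GrandNorm

theorem birkhoff_limit_in_grand_space_general
    {Ω : Type*} [MeasurableSpace Ω] (μ : Measure Ω) [IsProbabilityMeasure μ]
    (T : Ω → Ω) (hT : MeasurePreserving T μ μ)
    (p : Ω → ℝ) (hp : Measurable p) (hp1 : 1 < essInf p μ)
    (hpT : p ∘ T =ᵐ[μ] p)
    (θ : ℝ)
    (f : Ω → ℝ) (hf : Measurable f) (hfin : grandNorm μ p θ f < ⊤) :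
    ∃ fav : Ω → ℝ,
      (∀ᵐ x ∂μ, Tendsto (fun n : ℕ => (n : ℝ)⁻¹ * ∑ j ∈ Finset.range n, f (T^[j] x))
        atTop (𝓝 (fav x))) ∧
      grandNorm μ p θ fav ≤ grandNorm μ p θ f := by
  have hpe : ∀ᵐ x ∂μ, essInf p μ ≤ p x := ae_essInf_le_of_ne_zero (by linarith)
  have hq1 : ∀ ε ∈ Set.Ioo 0 (essInf p μ - 1), ∀ᵐ x ∂μ, 1 ≤ p x - ε :=
    fun ε hε => hpe.mono fun x hx => by linarith [hε.2]
  have hε₀ : (essInf p μ - 1) / 2 ∈ Set.Ioo 0 (essInf p μ - 1) := ⟨by linarith, by linarith⟩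
  have hfi : Integrable f μ :=
    integrable_of_luxNorm_lt_top hf (hq1 _ hε₀) (luxNorm_lt_top_of_grandNorm_lt_top hε₀ hfin)
  obtain ⟨fav, -, hfav⟩ := measurable_limit_of_tendsto_metrizable_ae
    (fun n => (measurable_birkhoffAverage hT.measurable hf n).aemeasurable)
    (ae_exists_tendsto_birkhoffAverage hT hf hfi)
  exact ⟨fav, hfav, grandNorm_le_of_luxNorm_le fun ε hε =>
    luxNorm_le_of_tendsto_birkhoffAverage hT hf (hp.sub_const ε) (hq1 ε hε) (hpT.fun_comp (· - ε))
      hfav⟩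

theorem birkhoff_limit_in_grand_space
    {Ω : Type*} [MeasurableSpace Ω] (μ : Measure Ω) [IsProbabilityMeasure μ]
    (T : Ω → Ω) (hT : MeasurePreserving T μ μ)
    (p : Ω → ℝ) (hp : Measurable p) (hp1 : 1 < essInf p μ)
    (hpT : p ∘ T =ᵐ[μ] p)
    (θ : ℝ) (hθ : 0 < θ)
    (f : Ω → ℝ) (hf : Measurable f) (hfin : grandNorm μ p θ f < ⊤) :
    ∃ fav : Ω → ℝ,
      (∀ᵐ x ∂μ, Tendsto (fun n : ℕ => (n : ℝ)⁻¹ * ∑ j ∈ Finset.range n, f (T^[j] x))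
        atTop (𝓝 (fav x))) ∧
      grandNorm μ p θ fav ≤ grandNorm μ p θ f :=
  birkhoff_limit_in_grand_space_general μ T hT p hp hp1 hpT θ f hf hfin
end

section
/- Let (Ω, Σ, μ) be a probability space, T measure-preserving, p a T-invariant measurable exponent with 1 < p⁻ ≤ p⁺ < ∞, and ε ∈ (0, p⁻ − 1). Then for every f ∈ L^{p(·),θ}(Ω), the Birkhoff limit f_av satisfies the modular inequality ∫_Ω |f_av(x)|^{p(x)−ε} dμ ≤ ∫_Ω |f(x)|^{p(x)−ε} dμ. -/
/-!
Fix a point `x` of a full-measure set. Since `p` is `T`-invariant, the exponent `q = p x - ε ≥ 1`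
is constant along the orbit of `x`, so Jensen's inequality for `t ↦ t ^ q` bounds
`|f_av x| ^ q` by the liminf of the Birkhoff averages of `|f| ^ (p - ε)` at `x`. By Fatou's lemma
the integral of that liminf is at most the liminf of the integrals of the averages, and each of
these equals `∫ |f| ^ (p - ε)` because `T` preserves `μ`.
-/

open MeasureTheory ENNReal Filter Topology

/-- The `essInf` of a real function that is not essentially bounded below is the junk value `0`,
so `0 ≤ c` excludes that case. -/
lemma ae_lt_of_nonneg_of_lt_essInf {α : Type*} [MeasurableSpace α] {μ : Measure α} {f : α → ℝ}
    {c : ℝ} (hc₀ : 0 ≤ c) (hc : c < essInf f μ) : ∀ᵐ x ∂μ, c < f x := by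
  refine ae_lt_of_lt_essInf hc ?_
  by_contra hbdd
  rw [essInf, Real.liminf_of_not_isBoundedUnder hbdd] at hc
  linarith

section

variable {α : Type*} {T : α → α}

lemma ofReal_abs_birkhoffAverage_le (f : α → ℝ) (n : ℕ) (x : α) :
    ENNReal.ofReal |birkhoffAverage ℝ T f n x| ≤
      (n : ℝ≥0∞)⁻¹ * birkhoffSum T (fun y => ENNReal.ofReal |f y|) n x := by
  rcases Nat.eq_zero_or_pos n with rfl | hn
  · simp
  have htriangle : |birkhoffAverage ℝ T f n x| ≤
      (n : ℝ)⁻¹ * ∑ j ∈ Finset.range n, |f (T^[j] x)| := by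
    rw [birkhoffAverage, birkhoffSum, smul_eq_mul, abs_mul, abs_inv, Nat.abs_cast]
    gcongr
    exact Finset.abs_sum_le_sum_abs _ _
  refine (ENNReal.ofReal_le_ofReal htriangle).trans_eq ?_
  rw [ENNReal.ofReal_mul (by positivity), ENNReal.ofReal_sum_of_nonneg fun j _ => abs_nonneg _,
    ENNReal.ofReal_inv_of_pos (by positivity), ENNReal.ofReal_natCast, birkhoffSum]

lemma inv_mul_birkhoffSum_rpow_le (g : α → ℝ≥0∞) {q : ℝ} (hq : 1 ≤ q) (n : ℕ) (x : α) :
    ((n : ℝ≥0∞)⁻¹ * birkhoffSum T g n x) ^ q ≤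
      (n : ℝ≥0∞)⁻¹ * birkhoffSum T (fun y => g y ^ q) n x := by
  rcases Nat.eq_zero_or_pos n with rfl | hn
  · simp [ENNReal.zero_rpow_of_pos (by linarith : 0 < q)]
  have hweights : ∑ _j ∈ Finset.range n, (n : ℝ≥0∞)⁻¹ = 1 := by
    rw [Finset.sum_const, Finset.card_range, nsmul_eq_mul,
      ENNReal.mul_inv_cancel (by exact_mod_cast hn.ne') (natCast_ne_top n)]
  simpa only [birkhoffSum, Finset.mul_sum] using
    ENNReal.rpow_arith_mean_le_arith_mean_rpow _ _ (fun j => g (T^[j] x)) hweights hq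

lemma ofReal_abs_rpow_le_liminf_inv_mul_birkhoffSum {f : α → ℝ} {x : α} {l q : ℝ} (hq : 1 ≤ q)
    (hl : Tendsto (birkhoffAverage ℝ T f · x) atTop (𝓝 l)) :
    ENNReal.ofReal |l| ^ q ≤ liminf (fun n : ℕ =>
      (n : ℝ≥0∞)⁻¹ * birkhoffSum T (fun y => ENNReal.ofReal |f y| ^ q) n x) atTop := by
  have hpow := ((ENNReal.continuous_rpow_const (y := q)).tendsto _).comp
    ((ENNReal.continuous_ofReal.tendsto _).comp hl.abs)
  rw [← hpow.liminf_eq]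
  refine liminf_le_liminf (.of_forall fun n => ?_)
  calc ENNReal.ofReal |birkhoffAverage ℝ T f n x| ^ q
      ≤ ((n : ℝ≥0∞)⁻¹ * birkhoffSum T (fun y => ENNReal.ofReal |f y|) n x) ^ q := by
        gcongr
        exact ofReal_abs_birkhoffAverage_le f n x
    _ ≤ _ := inv_mul_birkhoffSum_rpow_le _ hq n x

variable [MeasurableSpace α] {μ : Measure α}

lemma MeasureTheory.Measure.QuasiMeasurePreserving.ae_forall_comp_iterate_eq {β : Type*}
    {g : α → β} (hT : QuasiMeasurePreserving T μ μ) (hg : g ∘ T =ᵐ[μ] g) :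
    ∀ᵐ x ∂μ, ∀ n, g (T^[n] x) = g x := by
  refine ae_all_iff.2 fun n => ?_
  induction n with
  | zero => simp
  | succ n ih =>
    filter_upwards [(hT.iterate n).ae hg, ih] with x hstep hx
    rw [Function.iterate_succ_apply', ← hx]
    exact hstep

lemma Measurable.birkhoffSum {M : Type*} [AddCommMonoid M] [MeasurableSpace M]
    [MeasurableAdd₂ M] {g : α → M} (hg : Measurable g) (hT : Measurable T) (n : ℕ) :
    Measurable (birkhoffSum T g n) :=
  Finset.measurable_fun_sum _ fun j _ => hg.comp (hT.iterate j)

lemma MeasureTheory.MeasurePreserving.lintegral_birkhoffSum (hT : MeasurePreserving T μ μ)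
    {g : α → ℝ≥0∞} (hg : Measurable g) (n : ℕ) :
    ∫⁻ x, birkhoffSum T g n x ∂μ = n * ∫⁻ x, g x ∂μ := by
  simp only [birkhoffSum]
  rw [lintegral_finsetSum (f := fun j x => g (T^[j] x)) _
    fun j _ => hg.comp (hT.measurable.iterate j)]
  simp only [fun j => (hT.iterate j).lintegral_comp hg]
  rw [Finset.sum_const, Finset.card_range, nsmul_eq_mul]

lemma MeasureTheory.MeasurePreserving.lintegral_le_of_ae_le_liminf_inv_mul_birkhoffSum
    (hT : MeasurePreserving T μ μ) {g h : α → ℝ≥0∞} (hg : Measurable g)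
    (hh : ∀ᵐ x ∂μ, h x ≤ liminf (fun n : ℕ => (n : ℝ≥0∞)⁻¹ * birkhoffSum T g n x) atTop) :
    ∫⁻ x, h x ∂μ ≤ ∫⁻ x, g x ∂μ :=
  calc ∫⁻ x, h x ∂μ
      ≤ ∫⁻ x, liminf (fun n : ℕ => (n : ℝ≥0∞)⁻¹ * birkhoffSum T g n x) atTop ∂μ :=
        lintegral_mono_ae hh
    _ ≤ liminf (fun n : ℕ => ∫⁻ x, (n : ℝ≥0∞)⁻¹ * birkhoffSum T g n x ∂μ) atTop :=
        lintegral_liminf_le fun n => (hg.birkhoffSum hT.measurable n).const_mul _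
    _ = ∫⁻ x, g x ∂μ := by
        refine (liminf_congr ((eventually_ne_atTop 0).mono fun n hn => ?_)).trans (liminf_const _)
        rw [lintegral_const_mul _ (hg.birkhoffSum hT.measurable n), hT.lintegral_birkhoffSum hg,
          ← mul_assoc, ENNReal.inv_mul_cancel (by exact_mod_cast hn) (natCast_ne_top n), one_mul]

end

theorem birkhoff_limit_modular_inequality_general
    {Ω : Type*} [MeasurableSpace Ω] (μ : Measure Ω)
    (T : Ω → Ω) (hT : MeasurePreserving T μ μ)
    (p : Ω → ℝ) (hp : Measurable p)
    (hpT : p ∘ T =ᵐ[μ] p)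
    (ε : ℝ) (hε : ε ∈ Set.Ioo (0:ℝ) (essInf p μ - 1))
    (f : Ω → ℝ) (hf : Measurable f)
    (fav : Ω → ℝ)
    (hlim : ∀ᵐ x ∂μ, Tendsto (fun n : ℕ => (n : ℝ)⁻¹ * ∑ j ∈ Finset.range n, f (T^[j] x))
      atTop (𝓝 (fav x))) :
    ∫⁻ x, (ENNReal.ofReal |fav x|) ^ (p x - ε) ∂μ ≤
      ∫⁻ x, (ENNReal.ofReal |f x|) ^ (p x - ε) ∂μ := by
  have hexp : ∀ᵐ x ∂μ, 1 + ε < p x :=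
    ae_lt_of_nonneg_of_lt_essInf (by linarith [hε.1]) (by linarith [hε.2])
  refine hT.lintegral_le_of_ae_le_liminf_inv_mul_birkhoffSum
    ((measurable_ofReal.comp hf.abs).pow (hp.sub measurable_const)) ?_
  filter_upwards [hexp, hlim, hT.quasiMeasurePreserving.ae_forall_comp_iterate_eq hpT]
    with x hpx hx horbit
  have hconst : ∀ n, birkhoffSum T (fun y => ENNReal.ofReal |f y| ^ (p y - ε)) n x =
      birkhoffSum T (fun y => ENNReal.ofReal |f y| ^ (p x - ε)) n x := fun n => by
    simp only [birkhoffSum, horbit]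
  simp only [hconst]
  exact ofReal_abs_rpow_le_liminf_inv_mul_birkhoffSum (by linarith) hx

theorem birkhoff_limit_modular_inequality
    {Ω : Type*} [MeasurableSpace Ω] (μ : Measure Ω) [IsProbabilityMeasure μ]
    (T : Ω → Ω) (hT : MeasurePreserving T μ μ)
    (p : Ω → ℝ) (hp : Measurable p) (hp1 : 1 < essInf p μ)
    (hpT : p ∘ T =ᵐ[μ] p)
    (θ : ℝ) (hθ : 0 < θ)
    (ε : ℝ) (hε : ε ∈ Set.Ioo (0:ℝ) (essInf p μ - 1))
    (f : Ω → ℝ) (hf : Measurable f) (hfin : grandNorm μ p θ f < ⊤)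
    (fav : Ω → ℝ) (hfav : Measurable fav)
    (hlim : ∀ᵐ x ∂μ, Tendsto (fun n : ℕ => (n : ℝ)⁻¹ * ∑ j ∈ Finset.range n, f (T^[j] x))
      atTop (𝓝 (fav x))) :
    ∫⁻ x, (ENNReal.ofReal |fav x|) ^ (p x - ε) ∂μ ≤
      ∫⁻ x, (ENNReal.ofReal |f x|) ^ (p x - ε) ∂μ :=
  birkhoff_limit_modular_inequality_general μ T hT p hp hpT ε hε f hf fav hlim
end
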